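/- (Lemma 3.3(iii)) Assume (d2,q2) ∈ S1 and let (u,v) be a positive equilibrium. Then there do not exist integers l_1^*, l_2^* with 1 ≤ l_1^* ≤ l_2^* ≤ m2 such that: f^1_k ≤ 0 and g^1_k ≤ 0 for all 1 ≤ k ≤ l_1^*; f^2_k ≥ 0 and g^2_k ≥ 0 for all 1 ≤ k ≤ l_2^*; max{f^1_{l_1^*+1}, g^1_{l_1^*+1}} ≥ 0; and min{f^2_{l_2^*+1}, g^2_{l_2^*+1}} ≤ 0. -/
import Mathlib


open Finset Filter

noncomputable section

/-- Length of river segment `i` (segments are numbered 1, 2, 3; segments 1 and 2 are the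
branches, segment 3 is the main river). -/
def seg (m1 m2 m3 : ℕ) (i : ℕ) : ℕ := if i = 1 then m1 else if i = 2 then m2 else m3

/-- `w` is positive on all patches of the Y-shaped network. -/
def YPos (m1 m2 m3 : ℕ) (w : ℕ → ℕ → ℝ) : Prop :=
  ∀ i k, (i = 1 ∨ i = 2 ∨ i = 3) → 1 ≤ k → k ≤ seg m1 m2 m3 i → 0 < w i k

/-- Steady-state equations on the Y-shaped network for one species `w` with dispersal rate `d`,
drift rate `q`, intrinsic growth rate `r`, and competitor density `c` (take `c = 0` for the
single-species model).  The convention `w i 0 = w 3 m3` (for `i = 1, 2`) is part of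
the predicate. -/
def YEq (m1 m2 m3 : ℕ) (d q r : ℝ) (w c : ℕ → ℕ → ℝ) : Prop :=
  w 1 0 = w 3 m3 ∧ w 2 0 = w 3 m3 ∧
  (∀ i, (i = 1 ∨ i = 2) → ∀ k, 1 ≤ k → k + 1 ≤ seg m1 m2 m3 i →
    d * w i (k - 1) - (2 * d + q) * w i k + (d + q) * w i (k + 1)
      + w i k * (r - w i k - c i k) = 0) ∧
  (∀ k, 2 ≤ k → k + 1 ≤ m3 →
    d * w 3 (k - 1) - (2 * d + q) * w 3 k + (d + q) * w 3 (k + 1)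
      + w 3 k * (r - w 3 k - c 3 k) = 0) ∧
  (∀ i, (i = 1 ∨ i = 2) →
    -(d + q) * w i (seg m1 m2 m3 i) + d * w i (seg m1 m2 m3 i - 1)
      + w i (seg m1 m2 m3 i) * (r - w i (seg m1 m2 m3 i) - c i (seg m1 m2 m3 i)) = 0) ∧
  (-d * w 3 1 + (d + q) * w 3 2 + w 3 1 * (r - w 3 1 - c 3 1) = 0) ∧
  (d * w 3 (m3 - 1) - (3 * d + q) * w 3 m3 + (d + q) * (w 1 1 + w 2 1)
    + w 3 m3 * (r - w 3 m3 - c 3 m3) = 0)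

/-- Positive equilibrium of the two-species competition patch model on the Y-shaped network. -/
def YPosEquilibrium (m1 m2 m3 : ℕ) (d1 q1 d2 q2 r : ℝ) (u v : ℕ → ℕ → ℝ) : Prop :=
  YPos m1 m2 m3 u ∧ YPos m1 m2 m3 v ∧
  YEq m1 m2 m3 d1 q1 r u v ∧ YEq m1 m2 m3 d2 q2 r v u

/-- Single-species positive equilibrium for parameters `(d, q)`. -/
def YSingleEquilibrium (m1 m2 m3 : ℕ) (d q r : ℝ) (w : ℕ → ℕ → ℝ) : Prop :=
  YPos m1 m2 m3 w ∧ YEq m1 m2 m3 d q r w (fun _ _ => 0)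

/-- The auxiliary flux sequence (`f` when built from `u` with `(d1, q1)`, `g` when built
from `v` with `(d2, q2)`): `Yf ... d q w i k = d * w i (k-1) - (d+q) * w i k` on the index
range `1 ≤ k ≤ mᵢ` for `i = 1,2` and `2 ≤ k ≤ m3` for `i = 3`, and `0` otherwise (in
particular `f 3 1 = 0` and `f i (mᵢ + 1) = 0` for `i = 1, 2`). -/
def Yf (m1 m2 m3 : ℕ) (d q : ℝ) (w : ℕ → ℕ → ℝ) (i k : ℕ) : ℝ :=
  if i = 3 then (if 2 ≤ k ∧ k ≤ m3 then d * w 3 (k - 1) - (d + q) * w 3 k else 0)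
  else (if 1 ≤ k ∧ k ≤ seg m1 m2 m3 i then d * w i (k - 1) - (d + q) * w i k else 0)

/-- The auxiliary sequence `h` built from `v`, on the same index range as `Yf`. -/
def Yh (m1 m2 m3 : ℕ) (d1 q1 d2 q2 : ℝ) (v : ℕ → ℕ → ℝ) (i k : ℕ) : ℝ :=
  if i = 3 then
    (if 2 ≤ k ∧ k ≤ m3 then (d1 - d2) * (v 3 (k - 1) - v 3 k) - (q1 - q2) * v 3 k else 0)
  else
    (if 1 ≤ k ∧ k ≤ seg m1 m2 m3 i then
      (d1 - d2) * (v i (k - 1) - v i k) - (q1 - q2) * v i k else 0)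

/-- `(d, q)` belongs to the region `S1`. -/
def S1mem (d1 q1 d q : ℝ) : Prop :=
  0 < d ∧ d ≤ d1 ∧ 0 < q ∧ q ≤ (q1 / d1) * d ∧ (d, q) ≠ (d1, q1)

/-- `(d, q)` belongs to the region `S2`. -/
def S2mem (d1 q1 d q : ℝ) : Prop :=
  d1 ≤ d ∧ (q1 / d1) * d ≤ q ∧ (d, q) ≠ (d1, q1)

/-- The linearization at a semi-trivial equilibrium `(a, 0)`, with eigenvalue `0`:
`ψ` solves the linearized system for parameters `(d, q)` with potential `r - a`. -/
def YLinEq (m1 m2 m3 : ℕ) (d q r : ℝ) (a ψ : ℕ → ℕ → ℝ) : Prop :=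
  ψ 1 0 = ψ 3 m3 ∧ ψ 2 0 = ψ 3 m3 ∧
  (∀ i, (i = 1 ∨ i = 2) → ∀ k, 1 ≤ k → k + 1 ≤ seg m1 m2 m3 i →
    d * ψ i (k - 1) - (2 * d + q) * ψ i k + (d + q) * ψ i (k + 1)
      + (r - a i k) * ψ i k = 0) ∧
  (∀ k, 2 ≤ k → k + 1 ≤ m3 →
    d * ψ 3 (k - 1) - (2 * d + q) * ψ 3 k + (d + q) * ψ 3 (k + 1)
      + (r - a 3 k) * ψ 3 k = 0) ∧
  (∀ i, (i = 1 ∨ i = 2) →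
    -(d + q) * ψ i (seg m1 m2 m3 i) + d * ψ i (seg m1 m2 m3 i - 1)
      + (r - a i (seg m1 m2 m3 i)) * ψ i (seg m1 m2 m3 i) = 0) ∧
  (-d * ψ 3 1 + (d + q) * ψ 3 2 + (r - a 3 1) * ψ 3 1 = 0) ∧
  (d * ψ 3 (m3 - 1) - (3 * d + q) * ψ 3 m3 + (d + q) * (ψ 1 1 + ψ 2 1)
    + (r - a 3 m3) * ψ 3 m3 = 0)

/-- Time-dependent equations for one species `W` with competitor `C` on the Y-shaped network
(for `t ≥ 0`), with dispersal rate `d`, drift rate `q` and intrinsic growth rate `r`. -/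
def YFlow (m1 m2 m3 : ℕ) (d q r : ℝ) (W C : ℕ → ℕ → ℝ → ℝ) : Prop :=
  (∀ t : ℝ, W 1 0 t = W 3 m3 t) ∧ (∀ t : ℝ, W 2 0 t = W 3 m3 t) ∧
  (∀ i, (i = 1 ∨ i = 2) → ∀ k, 1 ≤ k → k + 1 ≤ seg m1 m2 m3 i → ∀ t : ℝ, 0 ≤ t →
    HasDerivAt (W i k)
      (d * W i (k - 1) t - (2 * d + q) * W i k t + (d + q) * W i (k + 1) t
        + W i k t * (r - W i k t - C i k t)) t) ∧
  (∀ k, 2 ≤ k → k + 1 ≤ m3 → ∀ t : ℝ, 0 ≤ t →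
    HasDerivAt (W 3 k)
      (d * W 3 (k - 1) t - (2 * d + q) * W 3 k t + (d + q) * W 3 (k + 1) t
        + W 3 k t * (r - W 3 k t - C 3 k t)) t) ∧
  (∀ i, (i = 1 ∨ i = 2) → ∀ t : ℝ, 0 ≤ t →
    HasDerivAt (W i (seg m1 m2 m3 i))
      (-(d + q) * W i (seg m1 m2 m3 i) t + d * W i (seg m1 m2 m3 i - 1) t
        + W i (seg m1 m2 m3 i) t
          * (r - W i (seg m1 m2 m3 i) t - C i (seg m1 m2 m3 i) t)) t) ∧
  (∀ t : ℝ, 0 ≤ t →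
    HasDerivAt (W 3 1)
      (-d * W 3 1 t + (d + q) * W 3 2 t + W 3 1 t * (r - W 3 1 t - C 3 1 t)) t) ∧
  (∀ t : ℝ, 0 ≤ t →
    HasDerivAt (W 3 m3)
      (d * W 3 (m3 - 1) t - (3 * d + q) * W 3 m3 t + (d + q) * (W 1 1 t + W 2 1 t)
        + W 3 m3 t * (r - W 3 m3 t - C 3 m3 t)) t)

/-- Solution of the two-species competition patch model on the Y-shaped network. -/
def YSolution (m1 m2 m3 : ℕ) (d1 q1 d2 q2 r : ℝ) (U V : ℕ → ℕ → ℝ → ℝ) : Prop :=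
  YFlow m1 m2 m3 d1 q1 r U V ∧ YFlow m1 m2 m3 d2 q2 r V U

/-- Nonnegative, not identically zero initial data. -/
def YInit (m1 m2 m3 : ℕ) (W : ℕ → ℕ → ℝ → ℝ) : Prop :=
  (∀ i k, (i = 1 ∨ i = 2 ∨ i = 3) → 1 ≤ k → k ≤ seg m1 m2 m3 i → 0 ≤ W i k 0) ∧
  (∃ i k, (i = 1 ∨ i = 2 ∨ i = 3) ∧ 1 ≤ k ∧ k ≤ seg m1 m2 m3 i ∧ 0 < W i k 0)


section AuxLemmas

variable {m1 m2 m3 : ℕ} {d q r : ℝ} {w c : ℕ → ℕ → ℝ}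

lemma seg_one' : seg m1 m2 m3 1 = m1 := by simp [seg]

lemma seg_two' : seg m1 m2 m3 2 = m2 := by simp [seg]

lemma seg_three' : seg m1 m2 m3 3 = m3 := by simp [seg]

lemma Yf_eq_branch {i k : ℕ} (hi : i = 1 ∨ i = 2) (h1 : 1 ≤ k)
    (h2 : k ≤ seg m1 m2 m3 i) :
    Yf m1 m2 m3 d q w i k = d * w i (k - 1) - (d + q) * w i k := by
  have hi3 : ¬ (i = 3) := by rcases hi with rfl | rfl <;> norm_num
  rw [Yf, if_neg hi3, if_pos ⟨h1, h2⟩]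

lemma Yf_branch_zero {i k : ℕ} (hi : i = 1 ∨ i = 2) (h2 : seg m1 m2 m3 i < k) :
    Yf m1 m2 m3 d q w i k = 0 := by
  have hi3 : ¬ (i = 3) := by rcases hi with rfl | rfl <;> norm_num
  rw [Yf, if_neg hi3, if_neg (by omega)]

lemma Yf_eq_three {k : ℕ} (h1 : 2 ≤ k) (h2 : k ≤ m3) :
    Yf m1 m2 m3 d q w 3 k = d * w 3 (k - 1) - (d + q) * w 3 k := by
  rw [Yf, if_pos rfl, if_pos ⟨h1, h2⟩]

lemma Yf_three_one : Yf m1 m2 m3 d q w 3 1 = 0 := by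
  rw [Yf, if_pos rfl, if_neg (by omega)]

lemma Yf_three_top : Yf m1 m2 m3 d q w 3 (m3 + 1) = 0 := by
  rw [Yf, if_pos rfl, if_neg (by omega)]

lemma nn_of_mul {a s : ℝ} (ha : 0 < a) (h : 0 ≤ a * s) : 0 ≤ s := by
  by_contra hs
  push_neg at hs
  nlinarith

lemma np_of_mul {a s : ℝ} (ha : 0 < a) (h : a * s ≤ 0) : s ≤ 0 := by
  by_contra hs
  push_neg at hs
  nlinarith

lemma chain_ge (x : ℕ → ℝ) {a : ℝ} (ha : 0 ≤ a) :
    ∀ N : ℕ, (∀ j, 1 ≤ j → j ≤ N → a * x (j - 1) ≤ x j) → a ^ N * x 0 ≤ x N := by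
  intro N
  induction N with
  | zero => intro _; simp
  | succ n ih =>
    intro h
    have h1 : a ^ n * x 0 ≤ x n := ih (fun j hj1 hj2 => h j hj1 (by omega))
    have h2 : a * x n ≤ x (n + 1) := by simpa using h (n + 1) (by omega) le_rfl
    calc a ^ (n + 1) * x 0 = a * (a ^ n * x 0) := by ring
    _ ≤ a * x n := mul_le_mul_of_nonneg_left h1 ha
    _ ≤ x (n + 1) := h2

lemma chain_le (x : ℕ → ℝ) {a : ℝ} (ha : 0 ≤ a) :
    ∀ N : ℕ, (∀ j, 1 ≤ j → j ≤ N → x j ≤ a * x (j - 1)) → x N ≤ a ^ N * x 0 := by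
  intro N
  induction N with
  | zero => intro _; simp
  | succ n ih =>
    intro h
    have h1 : x n ≤ a ^ n * x 0 := ih (fun j hj1 hj2 => h j hj1 (by omega))
    have h2 : x (n + 1) ≤ a * x n := by simpa using h (n + 1) (by omega) le_rfl
    calc x (n + 1) ≤ a * x n := h2
    _ ≤ a * (a ^ n * x 0) := mul_le_mul_of_nonneg_left h1 ha
    _ = a ^ (n + 1) * x 0 := by ring

lemma branch_diff (hw : YEq m1 m2 m3 d q r w c) {i j : ℕ} (hi : i = 1 ∨ i = 2)
    (h1 : 1 ≤ j) (h2 : j ≤ seg m1 m2 m3 i) :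
    Yf m1 m2 m3 d q w i (j + 1) - Yf m1 m2 m3 d q w i j
      = w i j * (r - w i j - c i j) := by
  rcases eq_or_lt_of_le h2 with heq' | hlt
  · subst heq'
    rw [Yf_branch_zero hi (by omega), Yf_eq_branch hi h1 le_rfl]
    have hup := hw.2.2.2.2.1 i hi
    linarith
  · rw [Yf_eq_branch hi (by omega) hlt, Yf_eq_branch hi h1 (le_of_lt hlt)]
    have hint := hw.2.2.1 i hi j h1 hlt
    have e1 : j + 1 - 1 = j := by omega
    rw [e1]
    linarith

lemma seg3_diff (hw : YEq m1 m2 m3 d q r w c) {j : ℕ}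
    (h1 : 1 ≤ j) (h2 : j + 1 ≤ m3) :
    Yf m1 m2 m3 d q w 3 (j + 1) - Yf m1 m2 m3 d q w 3 j
      = w 3 j * (r - w 3 j - c 3 j) := by
  rcases eq_or_lt_of_le h1 with heq' | hj
  · subst heq'
    rw [Yf_three_one, Yf_eq_three le_rfl h2]
    have hdown := hw.2.2.2.2.2.1
    norm_num
    linarith
  · rw [Yf_eq_three (by omega) h2, Yf_eq_three (by omega) (by omega)]
    have hint := hw.2.2.2.1 j (by omega) h2
    have e1 : j + 1 - 1 = j := by omega
    rw [e1]
    linarith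

lemma flux_pos_at (F x s : ℕ → ℝ) (n t : ℕ)
    (hd : ∀ j, 1 ≤ j → j ≤ n → F (j + 1) - F j = x j * s j)
    (htop : F (n + 1) = 0)
    (hx : ∀ j, 1 ≤ j → j ≤ n → 0 < x j)
    (ht1 : 1 ≤ t) (htn : t < n)
    (hneg : ∀ j, t < j → j ≤ n → s j ≤ 0)
    (hlast : s n < 0) : 0 < F (t + 1) := by
  have tele := Finset.sum_range_sub (fun j => F (t + 1 + j)) (n - t)
  rw [show t + 1 + (n - t) = n + 1 by omega, htop, show t + 1 + 0 = t + 1 by omega] at tele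
  have hsum : ∑ j ∈ Finset.range (n - t), (F (t + 1 + (j + 1)) - F (t + 1 + j)) < 0 := by
    obtain ⟨K, hK⟩ : ∃ K, n - t = K + 1 := ⟨n - t - 1, by omega⟩
    rw [hK, Finset.sum_range_succ]
    have hhead : ∑ j ∈ Finset.range K, (F (t + 1 + (j + 1)) - F (t + 1 + j)) ≤ 0 := by
      apply Finset.sum_nonpos
      intro j hj
      have hj' : j < K := Finset.mem_range.mp hj
      have hr := hd (t + 1 + j) (by omega) (by omega)
      rw [← Nat.add_assoc, hr]
      exact mul_nonpos_iff.mpr (Or.inl ⟨(hx (t + 1 + j) (by omega) (by omega)).le,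
        hneg (t + 1 + j) (by omega) (by omega)⟩)
    have htail : F (t + 1 + (K + 1)) - F (t + 1 + K) < 0 := by
      have hr := hd n (by omega) le_rfl
      rw [show t + 1 + (K + 1) = n + 1 by omega, show t + 1 + K = n by omega, hr]
      exact mul_neg_of_pos_of_neg (hx n (by omega) le_rfl) hlast
    linarith
  linarith

lemma dec_of_flux {d q x y : ℝ} (hd : 0 < d) (hq : 0 < q) (hy : 0 < y)
    (h : 0 < d * x - (d + q) * y) : y < x := by nlinarith

end AuxLemmas

/-- **Lemma 3.3(iii)**. -/
theorem stmt_5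
    (m1 m2 m3 : ℕ) (d1 q1 d2 q2 r : ℝ)
    (hm1 : 1 ≤ m1) (hm12 : m1 ≤ m2) (hm3 : 2 ≤ m3)
    (hd1 : 0 < d1) (hq1 : 0 < q1) (hr : 0 < r)
    (hS1 : S1mem d1 q1 d2 q2)
    (u v : ℕ → ℕ → ℝ)
    (heq : YPosEquilibrium m1 m2 m3 d1 q1 d2 q2 r u v) :
    ¬ ∃ l1 l2 : ℕ, 1 ≤ l1 ∧ l1 ≤ l2 ∧ l2 ≤ m2 ∧
      (∀ k, 1 ≤ k → k ≤ l1 →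
        Yf m1 m2 m3 d1 q1 u 1 k ≤ 0 ∧ Yf m1 m2 m3 d2 q2 v 1 k ≤ 0) ∧
      (∀ k, 1 ≤ k → k ≤ l2 →
        0 ≤ Yf m1 m2 m3 d1 q1 u 2 k ∧ 0 ≤ Yf m1 m2 m3 d2 q2 v 2 k) ∧
      0 ≤ max (Yf m1 m2 m3 d1 q1 u 1 (l1 + 1)) (Yf m1 m2 m3 d2 q2 v 1 (l1 + 1)) ∧
      min (Yf m1 m2 m3 d1 q1 u 2 (l2 + 1)) (Yf m1 m2 m3 d2 q2 v 2 (l2 + 1)) ≤ 0 := by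
  classical
  obtain ⟨hu, hv, hequ, heqv⟩ := heq
  rintro ⟨l1, l2, hl11, hl12, hl2m, hA, hB, hC, hD⟩
  obtain ⟨hd2, hd21, hq2, hq21, hne⟩ := hS1
  have hd1q1 : 0 < d1 + q1 := by linarith
  have hd2q2 : 0 < d2 + q2 := by linarith
  set A := d1 / (d1 + q1) with hAdef
  set B := d2 / (d2 + q2) with hBdef
  have hA0 : 0 < A := div_pos hd1 hd1q1
  have hB0 : 0 < B := div_pos hd2 hd2q2
  have hA1 : A < 1 := (div_lt_one hd1q1).mpr (by linarith)
  have hB1 : B < 1 := (div_lt_one hd2q2).mpr (by linarith)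
  have hAq : (d1 + q1) * A = d1 := by rw [hAdef]; field_simp
  have hBq : (d2 + q2) * B = d2 := by rw [hBdef]; field_simp
  -- positivity
  have pu1 : ∀ j, 1 ≤ j → j ≤ m1 → 0 < u 1 j := fun j h1 h2 =>
    hu 1 j (by norm_num) h1 (by rwa [seg_one'])
  have pu2 : ∀ j, 1 ≤ j → j ≤ m2 → 0 < u 2 j := fun j h1 h2 =>
    hu 2 j (by norm_num) h1 (by rwa [seg_two'])
  have pu3 : ∀ j, 1 ≤ j → j ≤ m3 → 0 < u 3 j := fun j h1 h2 =>
    hu 3 j (by norm_num) h1 (by rwa [seg_three'])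
  have pv1 : ∀ j, 1 ≤ j → j ≤ m1 → 0 < v 1 j := fun j h1 h2 =>
    hv 1 j (by norm_num) h1 (by rwa [seg_one'])
  have pv2 : ∀ j, 1 ≤ j → j ≤ m2 → 0 < v 2 j := fun j h1 h2 =>
    hv 2 j (by norm_num) h1 (by rwa [seg_two'])
  have pv3 : ∀ j, 1 ≤ j → j ≤ m3 → 0 < v 3 j := fun j h1 h2 =>
    hv 3 j (by norm_num) h1 (by rwa [seg_three'])
  have uJpos : 0 < u 3 m3 := pu3 m3 (by omega) le_rfl
  have vJpos : 0 < v 3 m3 := pv3 m3 (by omega) le_rfl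
  have hu10 : u 1 0 = u 3 m3 := hequ.1
  have hu20 : u 2 0 = u 3 m3 := hequ.2.1
  have hv10 : v 1 0 = v 3 m3 := heqv.1
  have hv20 : v 2 0 = v 3 m3 := heqv.2.1
  set k1 := min l1 m1 with hk1def
  set k2 := min l2 m2 with hk2def
  have hk11 : 1 ≤ k1 := le_min hl11 hm1
  have hk1m : k1 ≤ m1 := min_le_right _ _
  have hk1l : k1 ≤ l1 := min_le_left _ _
  have hk21 : 1 ≤ k2 := le_min (hl11.trans hl12) (hm1.trans hm12)
  have hk2m : k2 ≤ m2 := min_le_right _ _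
  have hk2l : k2 ≤ l2 := min_le_left _ _
  have hk12 : k1 ≤ k2 := min_le_min hl12 hm12
  -- step inequalities on the branches
  have step1u : ∀ j, 1 ≤ j → j ≤ k1 → A * u 1 (j - 1) ≤ u 1 j := by
    intro j h1 h2
    have hf := (hA j h1 (h2.trans hk1l)).1
    rw [Yf_eq_branch (Or.inl rfl) h1 (by rw [seg_one']; omega)] at hf
    rw [hAdef, div_mul_eq_mul_div, div_le_iff₀ hd1q1]
    linarith
  have step1v : ∀ j, 1 ≤ j → j ≤ k1 → B * v 1 (j - 1) ≤ v 1 j := by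
    intro j h1 h2
    have hf := (hA j h1 (h2.trans hk1l)).2
    rw [Yf_eq_branch (Or.inl rfl) h1 (by rw [seg_one']; omega)] at hf
    rw [hBdef, div_mul_eq_mul_div, div_le_iff₀ hd2q2]
    linarith
  have step2u : ∀ j, 1 ≤ j → j ≤ k2 → u 2 j ≤ A * u 2 (j - 1) := by
    intro j h1 h2
    have hf := (hB j h1 (h2.trans hk2l)).1
    rw [Yf_eq_branch (Or.inr rfl) h1 (by rw [seg_two']; omega)] at hf
    rw [hAdef, div_mul_eq_mul_div, le_div_iff₀ hd1q1]
    linarith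
  have step2v : ∀ j, 1 ≤ j → j ≤ k2 → v 2 j ≤ B * v 2 (j - 1) := by
    intro j h1 h2
    have hf := (hB j h1 (h2.trans hk2l)).2
    rw [Yf_eq_branch (Or.inr rfl) h1 (by rw [seg_two']; omega)] at hf
    rw [hBdef, div_mul_eq_mul_div, le_div_iff₀ hd2q2]
    linarith
  -- chains
  have c1u : A ^ k1 * u 3 m3 ≤ u 1 k1 := by
    simpa only [hu10] using chain_ge (fun j => u 1 j) hA0.le k1 step1u
  have c1v : B ^ k1 * v 3 m3 ≤ v 1 k1 := by
    simpa only [hv10] using chain_ge (fun j => v 1 j) hB0.le k1 step1v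
  have c2u : u 2 k2 ≤ A ^ k2 * u 3 m3 := by
    simpa only [hu20] using chain_le (fun j => u 2 j) hA0.le k2 step2u
  have c2v : v 2 k2 ≤ B ^ k2 * v 3 m3 := by
    simpa only [hv20] using chain_le (fun j => v 2 j) hB0.le k2 step2v
  -- sign of r - u - v at the tips of the chains
  have s1pos : 0 ≤ r - u 1 k1 - v 1 k1 := by
    rcases le_or_gt m1 l1 with hml | hlm
    · have hk : k1 = m1 := min_eq_right hml
      have hdf := branch_diff (i := 1) (j := m1) hequ (Or.inl rfl) hm1 (by rw [seg_one'])
      have hz : Yf m1 m2 m3 d1 q1 u 1 (m1 + 1) = 0 :=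
        Yf_branch_zero (Or.inl rfl) (by rw [seg_one']; omega)
      have hf := (hA m1 hm1 hml).1
      rw [hk]
      exact nn_of_mul (pu1 m1 hm1 le_rfl) (by linarith)
    · have hk : k1 = l1 := min_eq_left hlm.le
      rcases le_max_iff.mp hC with hcu | hcv
      · have hdf := branch_diff (i := 1) (j := l1) hequ (Or.inl rfl) hl11
          (by rw [seg_one']; omega)
        have hf := (hA l1 hl11 le_rfl).1
        rw [hk]
        exact nn_of_mul (pu1 l1 hl11 (by omega)) (by linarith)
      · have hdf := branch_diff (i := 1) (j := l1) heqv (Or.inl rfl) hl11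
          (by rw [seg_one']; omega)
        have hf := (hA l1 hl11 le_rfl).2
        rw [hk]
        have hvv : 0 ≤ r - v 1 l1 - u 1 l1 :=
          nn_of_mul (pv1 l1 hl11 (by omega)) (by linarith)
        linarith
  have s2neg : r - u 2 k2 - v 2 k2 ≤ 0 := by
    rcases le_or_gt m2 l2 with hml | hlm
    · have hk : k2 = m2 := min_eq_right hml
      have hdf := branch_diff (i := 2) (j := m2) hequ (Or.inr rfl) (by omega)
        (by rw [seg_two'])
      have hz : Yf m1 m2 m3 d1 q1 u 2 (m2 + 1) = 0 :=
        Yf_branch_zero (Or.inr rfl) (by rw [seg_two']; omega)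
      have hf := (hB m2 (by omega) hml).1
      rw [hk]
      exact np_of_mul (pu2 m2 (by omega) le_rfl) (by linarith)
    · have hk : k2 = l2 := min_eq_left hlm.le
      rcases min_le_iff.mp hD with hcu | hcv
      · have hdf := branch_diff (i := 2) (j := l2) hequ (Or.inr rfl) (by omega)
          (by rw [seg_two']; omega)
        have hf := (hB l2 (by omega) le_rfl).1
        rw [hk]
        exact np_of_mul (pu2 l2 (by omega) (by omega)) (by linarith)
      · have hdf := branch_diff (i := 2) (j := l2) heqv (Or.inr rfl) (by omega)
          (by rw [seg_two']; omega)
        have hf := (hB l2 (by omega) le_rfl).2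
        rw [hk]
        have hvv : r - v 2 l2 - u 2 l2 ≤ 0 :=
          np_of_mul (pv2 l2 (by omega) (by omega)) (by linarith)
        linarith
  -- power monotonicity
  have powA : A ^ k2 ≤ A ^ k1 := pow_le_pow_of_le_one hA0.le hA1.le hk12
  have powB : B ^ k2 ≤ B ^ k1 := pow_le_pow_of_le_one hB0.le hB1.le hk12
  have monoU : A ^ k2 * u 3 m3 ≤ A ^ k1 * u 3 m3 :=
    mul_le_mul_of_nonneg_right powA uJpos.le
  have monoV : B ^ k2 * v 3 m3 ≤ B ^ k1 * v 3 m3 :=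
    mul_le_mul_of_nonneg_right powB vJpos.le
  -- everything is an equality
  have Eq1 : u 1 k1 = A ^ k1 * u 3 m3 := le_antisymm (by linarith) c1u
  have Eq2 : v 1 k1 = B ^ k1 * v 3 m3 := le_antisymm (by linarith) c1v
  have Eq3 : u 2 k2 = A ^ k2 * u 3 m3 := le_antisymm c2u (by linarith)
  have Eq4 : v 2 k2 = B ^ k2 * v 3 m3 := le_antisymm c2v (by linarith)
  have Eq5 : u 1 k1 + v 1 k1 = r := by linarith
  have EqP : A ^ k1 * u 3 m3 = A ^ k2 * u 3 m3 := le_antisymm (by linarith) monoU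
  have hkk : k1 = k2 := by
    by_contra hne'
    have hlt : k1 < k2 := lt_of_le_of_ne hk12 hne'
    have h1 : A ^ k2 ≤ A ^ (k1 + 1) := pow_le_pow_of_le_one hA0.le hA1.le (by omega)
    have h2 : A ^ (k1 + 1) < A ^ k1 := by
      have hp := pow_pos hA0 k1
      calc A ^ (k1 + 1) = A * A ^ k1 := by ring
      _ < 1 * A ^ k1 := mul_lt_mul_of_pos_right hA1 hp
      _ = A ^ k1 := one_mul _
    have h3 : A ^ k2 * u 3 m3 < A ^ k1 * u 3 m3 :=
      mul_lt_mul_of_pos_right (lt_of_le_of_lt h1 h2) uJpos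
    linarith
  rcases eq_or_lt_of_le hk11 with hone | htwo
  · -- k1 = 1 : the degenerate case; pass to segment 3
    have hk1 : k1 = 1 := hone.symm
    rw [hk1] at Eq1 Eq2 Eq5
    rw [← hkk, hk1] at Eq3 Eq4
    have hu11 : u 1 1 = A * u 3 m3 := by rw [Eq1, pow_one]
    have hv11 : v 1 1 = B * v 3 m3 := by rw [Eq2, pow_one]
    have hu21 : u 2 1 = A * u 3 m3 := by rw [Eq3, pow_one]
    have hv21 : v 2 1 = B * v 3 m3 := by rw [Eq4, pow_one]
    have hrJ : A * u 3 m3 + B * v 3 m3 = r := by rw [← hu11, ← hv11]; exact Eq5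
    have hAu : A * u 3 m3 < u 3 m3 := by
      have := mul_lt_mul_of_pos_right hA1 uJpos
      rwa [one_mul] at this
    have hBv : B * v 3 m3 < v 3 m3 := by
      have := mul_lt_mul_of_pos_right hB1 vJpos
      rwa [one_mul] at this
    have hsJ : r - u 3 m3 - v 3 m3 < 0 := by linarith
    -- difference identity on segment 3, including the junction
    have hjun_u : Yf m1 m2 m3 d1 q1 u 3 (m3 + 1) - Yf m1 m2 m3 d1 q1 u 3 m3
        = u 3 m3 * (r - u 3 m3 - v 3 m3) := by
      rw [Yf_three_top, Yf_eq_three hm3 le_rfl]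
      have hjun := hequ.2.2.2.2.2.2
      have hx : (d1 + q1) * (u 1 1 + u 2 1) = 2 * (d1 * u 3 m3) := by
        rw [hu11, hu21]; linear_combination (2 * u 3 m3) * hAq
      linear_combination hx - hjun
    have hjun_v : Yf m1 m2 m3 d2 q2 v 3 (m3 + 1) - Yf m1 m2 m3 d2 q2 v 3 m3
        = v 3 m3 * (r - v 3 m3 - u 3 m3) := by
      rw [Yf_three_top, Yf_eq_three hm3 le_rfl]
      have hjun := heqv.2.2.2.2.2.2
      have hx : (d2 + q2) * (v 1 1 + v 2 1) = 2 * (d2 * v 3 m3) := by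
        rw [hv11, hv21]; linear_combination (2 * v 3 m3) * hBq
      linear_combination hx - hjun
    have DU : ∀ j, 1 ≤ j → j ≤ m3 → Yf m1 m2 m3 d1 q1 u 3 (j + 1) - Yf m1 m2 m3 d1 q1 u 3 j
        = u 3 j * (r - u 3 j - v 3 j) := by
      intro j h1 h2
      rcases eq_or_lt_of_le h2 with heq2 | hlt
      · rw [heq2]; exact hjun_u
      · exact seg3_diff hequ h1 hlt
    have DV : ∀ j, 1 ≤ j → j ≤ m3 → Yf m1 m2 m3 d2 q2 v 3 (j + 1) - Yf m1 m2 m3 d2 q2 v 3 j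
        = v 3 j * (r - u 3 j - v 3 j) := by
      intro j h1 h2
      have hh : Yf m1 m2 m3 d2 q2 v 3 (j + 1) - Yf m1 m2 m3 d2 q2 v 3 j
          = v 3 j * (r - v 3 j - u 3 j) := by
        rcases eq_or_lt_of_le h2 with heq2 | hlt
        · rw [heq2]; exact hjun_v
        · exact seg3_diff heqv h1 hlt
      rw [hh]; ring
    -- telescoping: total weighted growth is zero
    have SU : ∑ j ∈ Finset.range m3, u 3 (j + 1) * (r - u 3 (j + 1) - v 3 (j + 1)) = 0 := by
      have tele := Finset.sum_range_sub (fun j => Yf m1 m2 m3 d1 q1 u 3 (j + 1)) m3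
      calc ∑ j ∈ Finset.range m3, u 3 (j + 1) * (r - u 3 (j + 1) - v 3 (j + 1))
          = ∑ j ∈ Finset.range m3,
              (Yf m1 m2 m3 d1 q1 u 3 (j + 1 + 1) - Yf m1 m2 m3 d1 q1 u 3 (j + 1)) :=
            Finset.sum_congr rfl (fun j hj =>
              (DU (j + 1) (by omega) (by have := Finset.mem_range.mp hj; omega)).symm)
        _ = 0 := by
            rw [tele]
            norm_num [Yf_three_top, Yf_three_one]
    -- there is a patch with positive growth
    have hex : ∃ j, 1 ≤ j ∧ j ≤ m3 ∧ 0 < r - u 3 j - v 3 j := by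
      by_contra hno
      push_neg at hno
      obtain ⟨K, hK⟩ : ∃ K, m3 = K + 1 := ⟨m3 - 1, by omega⟩
      rw [hK, Finset.sum_range_succ] at SU
      have hhead : ∑ j ∈ Finset.range K, u 3 (j + 1) * (r - u 3 (j + 1) - v 3 (j + 1)) ≤ 0 :=
        Finset.sum_nonpos (fun j hj => by
          have hj' := Finset.mem_range.mp hj
          exact mul_nonpos_iff.mpr (Or.inl ⟨(pu3 (j + 1) (by omega) (by omega)).le,
            hno (j + 1) (by omega) (by omega)⟩))
      have htail : u 3 (K + 1) * (r - u 3 (K + 1) - v 3 (K + 1)) < 0 := by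
        rw [← hK]
        exact mul_neg_of_pos_of_neg uJpos hsJ
      linarith
    obtain ⟨j0, hj01, hj0m, hj0P⟩ := hex
    letI : DecidablePred (fun j : ℕ => 0 < r - u 3 j - v 3 j) := Classical.decPred _
    obtain ⟨t, htdef⟩ : ∃ t, t = Nat.findGreatest (fun j : ℕ => 0 < r - u 3 j - v 3 j) m3 :=
      ⟨_, rfl⟩
    have htP : 0 < r - u 3 t - v 3 t := by
      rw [htdef]; exact Nat.findGreatest_spec (P := fun j : ℕ => 0 < r - u 3 j - v 3 j) hj0m hj0P
    have ht1 : 1 ≤ t := by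
      rw [htdef]; exact le_trans hj01 (Nat.le_findGreatest (P := fun j : ℕ => 0 < r - u 3 j - v 3 j) hj0m hj0P)
    have htm : t ≤ m3 := by rw [htdef]; exact Nat.findGreatest_le m3
    have htn : t < m3 := by
      rcases eq_or_lt_of_le htm with hteq | h
      · rw [hteq] at htP; linarith
      · exact h
    have hmax : ∀ j, t < j → j ≤ m3 → r - u 3 j - v 3 j ≤ 0 := by
      intro j h1 h2
      by_contra hpos
      push_neg at hpos
      rw [htdef] at h1
      exact Nat.findGreatest_is_greatest (P := fun j : ℕ => 0 < r - u 3 j - v 3 j) h1 h2 hpos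
    have Fu_pos : 0 < Yf m1 m2 m3 d1 q1 u 3 (t + 1) :=
      flux_pos_at (fun k => Yf m1 m2 m3 d1 q1 u 3 k) (fun j => u 3 j)
        (fun j => r - u 3 j - v 3 j) m3 t DU Yf_three_top pu3 ht1 htn hmax hsJ
    have Fv_pos : 0 < Yf m1 m2 m3 d2 q2 v 3 (t + 1) :=
      flux_pos_at (fun k => Yf m1 m2 m3 d2 q2 v 3 k) (fun j => v 3 j)
        (fun j => r - u 3 j - v 3 j) m3 t DV Yf_three_top pv3 ht1 htn hmax hsJ
    have FU : 0 < d1 * u 3 t - (d1 + q1) * u 3 (t + 1) := by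
      have h := Fu_pos
      rw [Yf_eq_three (k := t + 1) (by omega) (by omega)] at h
      simpa using h
    have FV : 0 < d2 * v 3 t - (d2 + q2) * v 3 (t + 1) := by
      have h := Fv_pos
      rw [Yf_eq_three (k := t + 1) (by omega) (by omega)] at h
      simpa using h
    have hUdec : u 3 (t + 1) < u 3 t :=
      dec_of_flux hd1 hq1 (pu3 (t + 1) (by omega) (by omega)) FU
    have hVdec : v 3 (t + 1) < v 3 t :=
      dec_of_flux hd2 hq2 (pv3 (t + 1) (by omega) (by omega)) FV
    have hs2 : r - u 3 (t + 1) - v 3 (t + 1) ≤ 0 := hmax (t + 1) (by omega) (by omega)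
    linarith [htP, hs2, hUdec, hVdec]
  · -- 2 ≤ k1 : immediate contradiction on branch 1
    obtain ⟨K, hK⟩ : ∃ K, k1 = K + 1 := ⟨k1 - 1, by omega⟩
    have hK1 : 1 ≤ K := by omega
    have c1u' : A ^ K * u 3 m3 ≤ u 1 K := by
      simpa only [hu10] using chain_ge (fun j => u 1 j) hA0.le K
        (fun j h1 h2 => step1u j h1 (by omega))
    have c1v' : B ^ K * v 3 m3 ≤ v 1 K := by
      simpa only [hv10] using chain_ge (fun j => v 1 j) hB0.le K
        (fun j h1 h2 => step1v j h1 (by omega))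
    have stepK_u : A * u 1 K ≤ u 1 (K + 1) := by
      simpa using step1u (K + 1) (by omega) (by omega)
    have stepK_v : B * v 1 K ≤ v 1 (K + 1) := by
      simpa using step1v (K + 1) (by omega) (by omega)
    rw [hK] at Eq1 Eq2 Eq5
    have EqKu : u 1 K = A ^ K * u 3 m3 := by
      refine le_antisymm ?_ c1u'
      have hh : A * u 1 K ≤ A * (A ^ K * u 3 m3) := by
        calc A * u 1 K ≤ u 1 (K + 1) := stepK_u
        _ = A ^ (K + 1) * u 3 m3 := Eq1
        _ = A * (A ^ K * u 3 m3) := by ring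
      exact le_of_mul_le_mul_left hh hA0
    have EqKv : v 1 K = B ^ K * v 3 m3 := by
      refine le_antisymm ?_ c1v'
      have hh : B * v 1 K ≤ B * (B ^ K * v 3 m3) := by
        calc B * v 1 K ≤ v 1 (K + 1) := stepK_v
        _ = B ^ (K + 1) * v 3 m3 := Eq2
        _ = B * (B ^ K * v 3 m3) := by ring
      exact le_of_mul_le_mul_left hh hB0
    have fzero : Yf m1 m2 m3 d1 q1 u 1 (K + 1) = 0 := by
      rw [Yf_eq_branch (Or.inl rfl) (by omega) (by rw [seg_one']; omega)]
      have e : K + 1 - 1 = K := by omega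
      rw [e, EqKu, Eq1]
      linear_combination (-(A ^ K * u 3 m3)) * hAq
    have hdfK := branch_diff (i := 1) (j := K) hequ (Or.inl rfl) hK1
      (by rw [seg_one']; omega)
    have hfK := (hA K hK1 (by omega)).1
    have sK : 0 ≤ r - u 1 K - v 1 K := by
      apply nn_of_mul (pu1 K hK1 (by omega))
      linarith
    have hAp : A ^ (K + 1) * u 3 m3 < A ^ K * u 3 m3 := by
      have hp : A ^ (K + 1) < A ^ K := by
        calc A ^ (K + 1) = A * A ^ K := by ring
        _ < 1 * A ^ K := mul_lt_mul_of_pos_right hA1 (pow_pos hA0 K)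
        _ = A ^ K := one_mul _
      exact mul_lt_mul_of_pos_right hp uJpos
    have hBp : B ^ (K + 1) * v 3 m3 < B ^ K * v 3 m3 := by
      have hp : B ^ (K + 1) < B ^ K := by
        calc B ^ (K + 1) = B * B ^ K := by ring
        _ < 1 * B ^ K := mul_lt_mul_of_pos_right hB1 (pow_pos hB0 K)
        _ = B ^ K := one_mul _
      exact mul_lt_mul_of_pos_right hp vJpos
    linarith
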